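/- Among the five equations 1 + σ_k σ_{k+1} = -i σ_{k+3}, k ∈ Z/5, for complex numbers σ_{-2},…,σ_2, if the equations hold for k = 0, 1, 2, then they also hold for k = 3 and k = 4, with no nonvanishing assumption on σ_k σ_{k+1} + 1. -/
import Mathlib

open Complex

/-- Only three of the five cyclic Stokes relations are independent: if
`1 + σ_k σ_{k+1} = -i σ_{k+3}` holds for `k = 0, 1, 2`, then it also holds
for `k = 3` and `k = 4`. -/
theorem stokes_relations_dependence
    (σ : ZMod 5 → ℂ)
    (h0 : 1 + σ 0 * σ 1 = -I * σ 3)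
    (h1 : 1 + σ 1 * σ 2 = -I * σ 4)
    (h2 : 1 + σ 2 * σ 3 = -I * σ 0) :
    (1 + σ 3 * σ 4 = -I * σ 1) ∧ (1 + σ 4 * σ 0 = -I * σ 2) := by
  have e3 : σ 3 = I + I * σ 0 * σ 1 := by
    linear_combination -I * h0 + σ 3 * Complex.I_sq
  have e4 : σ 4 = I + I * σ 1 * σ 2 := by
    linear_combination -I * h1 + σ 4 * Complex.I_sq
  have key : σ 0 + σ 2 + σ 0 * σ 1 * σ 2 = I := by
    linear_combination -I * h2 + I * σ 2 * e3 + (σ 0 + σ 2 + σ 0 * σ 1 * σ 2) * Complex.I_sq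
  constructor
  · rw [e3, e4]
    linear_combination -σ 1 * key + (1 + σ 0 * σ 1) * (1 + σ 1 * σ 2) * Complex.I_sq
  · rw [e4]
    linear_combination I * key + Complex.I_sq
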